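/- The Hadamard gradient flow is a mirror descent flow with time-varying hyperbolic entropy: let λ ≥ 0, F : ℝ^n → ℝ differentiable, and let u, v : [0,∞) → ℝ^n solve the coupled ODEs u̇(t) = −λu(t) − v(t)·∇F(u(t)·v(t)) and v̇(t) = −λv(t) − u(t)·∇F(u(t)·v(t)) (all products coordinatewise). Set x(t) := u(t)·v(t) and γ(t) := ½|u(0)² − v(0)²| e^{−2λt} (coordinatewise). Then with η_c(s) := s·arcsinh(s/c) − √(s²+c²) + c applied coordinatewise (so ∇η_c(x) = arcsinh(x/c) coordinatewise), one has d/dt ∇η_{γ(t)}(x(t)) = −2∇F(x(t)) for all t. -/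

import Mathlib

/-!
Coordinatewise, `(u² − v²) e^{2λt}` is conserved along the flow, so the entropy parameter is
`γ(t) = ½|u(t)² − v(t)²|`. Since `(u² + v²)² = (2uv)² + (u² − v²)²`, the factor `√(x² + γ²)` in
`d/dt arsinh(x/γ) = (ẋ + 2λx) / √(x² + γ²)` equals `(u² + v²)/2`, while `ẋ + 2λx = −(u² + v²)∇F(x)`;
the two cancel and leave `−2∇F(x)`.
-/

/-- The continuous linear functional `w ↦ ⟨grad, w⟩` on `ℝ^n`. -/
noncomputable def vecCLM {n : ℕ} (grad : Fin n → ℝ) : (Fin n → ℝ) →L[ℝ] ℝ :=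
  LinearMap.toContinuousLinearMap (∑ i, grad i • LinearMap.proj i)

open Real

theorem HasDerivAt.arsinh_div {x g : ℝ → ℝ} {x' g' t : ℝ} (hx : HasDerivAt x x' t)
    (hg : HasDerivAt g g' t) (hg_pos : 0 < g t) :
    HasDerivAt (fun s => Real.arsinh (x s / g s))
      ((x' * g t - x t * g') / (g t * √(x t ^ 2 + g t ^ 2))) t := by
  have hsqrt : √(1 + (x t / g t) ^ 2) = √(x t ^ 2 + g t ^ 2) / g t := by
    rw [sqrt_eq_iff_mul_self_eq (by positivity) (by positivity), div_mul_div_comm,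
      mul_self_sqrt (by positivity)]
    field_simp
    ring
  have hsqrt_pos : 0 < √(x t ^ 2 + g t ^ 2) := sqrt_pos.2 (by positivity)
  convert (hx.fun_div hg hg_pos.ne').arsinh using 1
  rw [hsqrt, smul_eq_mul]
  field_simp

theorem sqrt_mul_sq_add_sq_sub_sq_div_two (a b : ℝ) :
    √((a * b) ^ 2 + ((a ^ 2 - b ^ 2) / 2) ^ 2) = (a ^ 2 + b ^ 2) / 2 := by
  rw [sqrt_eq_iff_mul_self_eq (by positivity) (by positivity)]
  ring

section HadamardFlow

variable {lam : ℝ} {a b d : ℝ → ℝ}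
  (ha : ∀ s, HasDerivAt a (-lam * a s - b s * d s) s)
  (hb : ∀ s, HasDerivAt b (-lam * b s - a s * d s) s)
include ha hb

theorem sq_sub_sq_eq_mul_exp_of_hadamardFlow (t : ℝ) :
    a t ^ 2 - b t ^ 2 = (a 0 ^ 2 - b 0 ^ 2) * exp (-2 * lam * t) := by
  have hconserved : ∀ s,
      HasDerivAt (fun r => (a r ^ 2 - b r ^ 2) * exp (2 * lam * r)) 0 s := by
    intro s
    have hexp : HasDerivAt (fun r => exp (2 * lam * r)) (exp (2 * lam * s) * (2 * lam)) s := by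
      simpa using ((hasDerivAt_id s).const_mul (2 * lam)).exp
    refine (((ha s).fun_pow 2).fun_sub ((hb s).fun_pow 2)).fun_mul hexp |>.congr_deriv ?_
    simp only [Nat.cast_ofNat, Nat.add_one_sub_one, pow_one]
    ring
  have hconst := is_const_of_deriv_eq_zero (fun r => (hconserved r).differentiableAt)
    (fun r => (hconserved r).deriv) t 0
  simp only [mul_zero, exp_zero, mul_one] at hconst
  rw [← hconst, mul_assoc, ← exp_add, show 2 * lam * t + -2 * lam * t = 0 by ring, exp_zero,
    mul_one]

theorem hasDerivAt_mul_of_hadamardFlow (t : ℝ) :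
    HasDerivAt (fun s => a s * b s) (-2 * lam * (a t * b t) - (a t ^ 2 + b t ^ 2) * d t) t :=
  (ha t).fun_mul (hb t) |>.congr_deriv (by ring)

theorem hasDerivAt_arsinh_div_of_hadamardFlow (hinit : a 0 ^ 2 ≠ b 0 ^ 2) (t : ℝ) :
    HasDerivAt
      (fun s => arsinh ((a s * b s) / ((1/2) * |a 0 ^ 2 - b 0 ^ 2| * exp (-2 * lam * s))))
      (-2 * d t) t := by
  set γ : ℝ → ℝ := fun s => (1/2) * |a 0 ^ 2 - b 0 ^ 2| * exp (-2 * lam * s)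
  have hγ_deriv : HasDerivAt γ (-2 * lam * γ t) t := by
    refine (((hasDerivAt_id t).const_mul (-2 * lam)).exp.const_mul
      ((1/2) * |a 0 ^ 2 - b 0 ^ 2|)).congr_deriv ?_
    simp only [γ, id]
    ring
  have hγ_pos : 0 < γ t := by
    have : 0 < |a 0 ^ 2 - b 0 ^ 2| := abs_pos.2 (sub_ne_zero.2 hinit)
    positivity
  have hγ_eq : γ t = |a t ^ 2 - b t ^ 2| / 2 := by
    rw [sq_sub_sq_eq_mul_exp_of_hadamardFlow ha hb, abs_mul, abs_of_pos (exp_pos _)]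
    ring
  have hsqrt : √((a t * b t) ^ 2 + γ t ^ 2) = (a t ^ 2 + b t ^ 2) / 2 := by
    rw [hγ_eq, div_pow, sq_abs, ← div_pow, sqrt_mul_sq_add_sq_sub_sq_div_two]
  have hab_pos : 0 < a t ^ 2 + b t ^ 2 := by
    have : |a t ^ 2 - b t ^ 2| ≤ a t ^ 2 + b t ^ 2 :=
      abs_le.2 ⟨by nlinarith [sq_nonneg (a t)], by nlinarith [sq_nonneg (b t)]⟩
    linarith [hγ_eq ▸ hγ_pos]
  convert HasDerivAt.arsinh_div (hasDerivAt_mul_of_hadamardFlow ha hb t) hγ_deriv hγ_pos using 1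
  rw [hsqrt]
  field_simp
  ring

end HadamardFlow

theorem statement10_general {n : ℕ} (lam : ℝ)
    (DF : (Fin n → ℝ) → (Fin n → ℝ))
    (u v : ℝ → Fin n → ℝ)
    (hu : ∀ t i, HasDerivAt (fun s => u s i)
      (-lam * u t i - v t i * DF (fun i' => u t i' * v t i') i) t)
    (hv : ∀ t i, HasDerivAt (fun s => v s i)
      (-lam * v t i - u t i * DF (fun i' => u t i' * v t i') i) t)
    (hinit : ∀ i, (u 0 i)^2 ≠ (v 0 i)^2) :
    ∀ t i, HasDerivAt
      (fun s => Real.arsinh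
        ((u s i * v s i) / ((1/2) * |(u 0 i)^2 - (v 0 i)^2| * Real.exp (-2*lam*s))))
      (-2 * DF (fun i' => u t i' * v t i') i) t :=
  fun t i => hasDerivAt_arsinh_div_of_hadamardFlow
    (d := fun s => DF (fun i' => u s i' * v s i') i) (fun s => hu s i) (fun s => hv s i) (hinit i) t

/-- The Hadamard gradient flow is a mirror descent flow with a
time-varying hyperbolic entropy.  Let `λ ≥ 0`, `F` differentiable with gradient
`DF`, and let `u, v` solve (coordinatewise)
`u̇ = −λu − v·∇F(u·v)`, `v̇ = −λv − u·∇F(u·v)`.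
With `x(t) = u(t)·v(t)`, `γ(t)_i = ½|u(0)_i² − v(0)_i²| e^{−2λt}` (assumed
nonzero at `t = 0`) and `∇η_c(x)_i = arcsinh(x_i/c_i)`, one has
`d/dt ∇η_{γ(t)}(x(t)) = −2∇F(x(t))` in every coordinate, for all `t`. -/
theorem statement10 {n : ℕ} (lam : ℝ) (hlam : 0 ≤ lam)
    (F : (Fin n → ℝ) → ℝ) (DF : (Fin n → ℝ) → (Fin n → ℝ))
    (hDF : ∀ x, HasFDerivAt F (vecCLM (DF x)) x)
    (u v : ℝ → Fin n → ℝ)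
    (hu : ∀ t i, HasDerivAt (fun s => u s i)
      (-lam * u t i - v t i * DF (fun i' => u t i' * v t i') i) t)
    (hv : ∀ t i, HasDerivAt (fun s => v s i)
      (-lam * v t i - u t i * DF (fun i' => u t i' * v t i') i) t)
    (hinit : ∀ i, (u 0 i)^2 ≠ (v 0 i)^2) :
    ∀ t i, HasDerivAt
      (fun s => Real.arsinh
        ((u s i * v s i) / ((1/2) * |(u 0 i)^2 - (v 0 i)^2| * Real.exp (-2*lam*s))))
      (-2 * DF (fun i' => u t i' * v t i') i) t :=
  statement10_general lam DF u v hu hv hinit
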